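/- arXiv:1503.06995 — 4 statements merged into one kernel-verified Lean document; each statement's English description precedes it below -/
import Mathlib

section
/- Let c, d : ℝ → ℝ³ be differentiable, and suppose there exist functions Λ, M : ℝ → ℝ and points p₀(u), p₁(u), q₀(u), q₁(u) in ℝ³ such that c'(u) is a positive multiple of p₁(u) - p₀(u), d'(u) is a positive multiple of q₁(u) - q₀(u), c(u) lies on the segment line through p₀(u), p₁(u), d(u) on the line through q₀(u), q₁(u), and (1-Λ(u))·p₀(u) + Λ(u)·p₁(u) = (1-M(u))·q₀(u) + M(u)·q₁(u). Then for each u the vectors c'(u), d'(u), d(u) - c(u) are linearly dependent, so the ruled surface between c and d is developable. -/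
/-!
Through the common point `X` of the two lines, `d(u) - c(u) = (d(u) - X) + (X - c(u))`, and each
summand is a displacement along one of the lines, hence a multiple of `d'(u)`, resp. `c'(u)`.
-/

open Submodule

theorem not_linearIndependent_of_mem_span_pair {R V : Type*} [Ring R] [Nontrivial R]
    [AddCommGroup V] [Module R V] {x y z : V} (hz : z ∈ span R {x, y}) :
    ¬ LinearIndependent R ![x, y, z] := by
  obtain ⟨a, b, rfl⟩ := mem_span_pair.mp hz
  intro hli
  have := Fintype.linearIndependent_iff.mp hli ![a, b, -1] (by
    simp only [Fin.sum_univ_three, Matrix.cons_val_zero, Matrix.cons_val_one, Matrix.cons_val,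
      neg_smul, one_smul]
    abel) 2
  simp at this

theorem AffineMap.lineMap_sub_lineMap_mem_span_smul {K V : Type*} [Field K]
    [AddCommGroup V] [Module K V] (p₀ p₁ : V) (s t : K) {k : K} (hk : k ≠ 0) :
    lineMap p₀ p₁ s - lineMap p₀ p₁ t ∈ K ∙ (k • (p₁ - p₀)) :=
  mem_span_singleton.mpr ⟨(s - t) / k, by
    rw [smul_smul, div_mul_cancel₀ _ hk, lineMap_apply_module', lineMap_apply_module']
    module⟩

theorem developable_of_common_point_on_lines_general
    (c d : ℝ → Fin 3 → ℝ)
    (Λ M : ℝ → ℝ) (p₀ p₁ q₀ q₁ : ℝ → Fin 3 → ℝ)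
    (hcp : ∀ u, ∃ k : ℝ, 0 < k ∧ deriv c u = k • (p₁ u - p₀ u))
    (hdq : ∀ u, ∃ k : ℝ, 0 < k ∧ deriv d u = k • (q₁ u - q₀ u))
    (hcl : ∀ u, ∃ t : ℝ, c u = (1 - t) • p₀ u + t • p₁ u)
    (hdl : ∀ u, ∃ t : ℝ, d u = (1 - t) • q₀ u + t • q₁ u)
    (hmeet : ∀ u, (1 - Λ u) • p₀ u + Λ u • p₁ u = (1 - M u) • q₀ u + M u • q₁ u) :
    ∀ u, ¬ LinearIndependent ℝ ![deriv c u, deriv d u, d u - c u] := by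
  intro u
  obtain ⟨k, hk, hc'⟩ := hcp u
  obtain ⟨l, hl, hd'⟩ := hdq u
  obtain ⟨t, hct⟩ := hcl u
  obtain ⟨s, hds⟩ := hdl u
  have hmeet' := hmeet u
  simp only [← AffineMap.lineMap_apply_module] at hct hds hmeet'
  set X := AffineMap.lineMap (p₀ u) (p₁ u) (Λ u)
  have hXc : X - c u ∈ ℝ ∙ deriv c u := by
    rw [hct, hc']
    exact AffineMap.lineMap_sub_lineMap_mem_span_smul _ _ _ _ hk.ne'
  have hdX : d u - X ∈ ℝ ∙ deriv d u := by
    rw [hds, hmeet', hd']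
    exact AffineMap.lineMap_sub_lineMap_mem_span_smul _ _ _ _ hl.ne'
  apply not_linearIndependent_of_mem_span_pair
  rw [span_insert, ← sub_add_sub_cancel' X]
  exact add_mem_sup hXc hdX

/-- If `c'(u)` is a positive multiple of `p₁(u) - p₀(u)`, `d'(u)` a positive
multiple of `q₁(u) - q₀(u)`, `c(u)` lies on the line through `p₀(u), p₁(u)`,
`d(u)` on the line through `q₀(u), q₁(u)`, and
`(1-Λ(u))·p₀(u) + Λ(u)·p₁(u) = (1-M(u))·q₀(u) + M(u)·q₁(u)`, then the vectors
`c'(u)`, `d'(u)`, `d(u) - c(u)` are linearly dependent for every `u`, so the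
ruled surface between `c` and `d` is developable. -/
theorem developable_of_common_point_on_lines
    (c d : ℝ → Fin 3 → ℝ) (hc : Differentiable ℝ c) (hd : Differentiable ℝ d)
    (Λ M : ℝ → ℝ) (p₀ p₁ q₀ q₁ : ℝ → Fin 3 → ℝ)
    (hcp : ∀ u, ∃ k : ℝ, 0 < k ∧ deriv c u = k • (p₁ u - p₀ u))
    (hdq : ∀ u, ∃ k : ℝ, 0 < k ∧ deriv d u = k • (q₁ u - q₀ u))
    (hcl : ∀ u, ∃ t : ℝ, c u = (1 - t) • p₀ u + t • p₁ u)
    (hdl : ∀ u, ∃ t : ℝ, d u = (1 - t) • q₀ u + t • q₁ u)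
    (hmeet : ∀ u, (1 - Λ u) • p₀ u + Λ u • p₁ u = (1 - M u) • q₀ u + M u • q₁ u) :
    ∀ u, ¬ LinearIndependent ℝ ![deriv c u, deriv d u, d u - c u] :=
  developable_of_common_point_on_lines_general c d Λ M p₀ p₁ q₀ q₁ hcp hdq hcl hdl hmeet
end

section
/- Let c : ℝⁿ → ℝ³ be a symmetric multiaffine map (a blossom of degree n) and let Λ* be a real number. Define d as another symmetric multiaffine map of degree n such that c(v₁,…,v_{n-1},Λ*) = d(v₁,…,v_{n-1},M*) for all v₁,…,v_{n-1} and some fixed real M*. Then the diagonal curves C(u) = c(u,…,u) and D(u) = d(u,…,u) satisfy: for every u, the point (1-λ(u))·A(u) + λ(u)·B(u) equals (1-μ(u))·A'(u) + μ(u)·B'(u), where A(u) = c(u^{n-1}, a), B(u) = c(u^{n-1}, b) for any a < b with Λ* = (1-λ̂)a + λ̂ b, and analogously for d; in particular the vectors C'(u), D'(u), D(u) - C(u) are linearly dependent for all u. -/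
/-!
Fixing the last argument, `t ↦ c(v, t)` is affine, so on the diagonal
`C(u) = c(uⁿ, 0) + u • E(u)` with `E(u) = c(uⁿ, 1) - c(uⁿ, 0)`; differentiating this by induction on
the degree, with symmetry moving the diagonal entry into the last slot, gives `C'(u) = (n + 1) • E(u)`.
The blossom identity at `v = uⁿ` reads `c(uⁿ, 0) + Λ • E = d(uⁿ, 0) + M • F`, hence
`D(u) - C(u) = (Λ - u) • E + (u - M) • F` is a combination of `C'(u)` and `D'(u)`.
-/

/-- A map `(Fin n → ℝ) → ℝ³` is multiaffine if it is affine in each argument. -/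
def MultiAffineFn {n : ℕ} (c : (Fin n → ℝ) → Fin 3 → ℝ) : Prop :=
  ∀ (i : Fin n) (v : Fin n → ℝ) (s t l m : ℝ), l + m = 1 →
    c (Function.update v i (l * s + m * t)) =
      l • c (Function.update v i s) + m • c (Function.update v i t)

/-- A map `(Fin n → ℝ) → ℝ³` is symmetric if it is invariant under
permutations of its arguments. -/
def SymmetricFn {n : ℕ} (c : (Fin n → ℝ) → Fin 3 → ℝ) : Prop :=
  ∀ (σ : Equiv.Perm (Fin n)) (v : Fin n → ℝ), c (v ∘ σ) = c v

theorem Fin.const_eq_snoc {α : Type*} {m : ℕ} (x : α) :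
    (fun _ : Fin (m + 1) => x) = Fin.snoc (fun _ : Fin m => x) x :=
  (Fin.snoc_init_self _).symm

theorem Fin.snoc_comp_permCongr_optionCongr {α : Type*} {m : ℕ} (σ : Equiv.Perm (Fin m))
    (v : Fin m → α) (x : α) :
    Fin.snoc v x ∘ finSuccEquivLast.symm.permCongr (Equiv.optionCongr σ) =
      Fin.snoc (v ∘ σ) x := by
  funext i
  induction i using Fin.lastCases <;> simp [Equiv.permCongr_apply]

theorem Fin.snoc_snoc_comp_swap {α : Type*} {m : ℕ} (w : Fin m → α) (x y : α) :
    Fin.snoc (Fin.snoc w x) y ∘ Equiv.swap (Fin.last m).castSucc (Fin.last (m + 1)) =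
      Fin.snoc (Fin.snoc w y) x := by
  funext i
  induction i using Fin.lastCases with
  | last => simp
  | cast j =>
    induction j using Fin.lastCases with
    | last => simp
    | cast k =>
      rw [Function.comp_apply, Equiv.swap_apply_of_ne_of_ne (by simp [Fin.ext_iff]; omega)
        (by simp [Fin.ext_iff]; omega)]
      simp

namespace MultiAffineFn

variable {m : ℕ} {f : (Fin (m + 1) → ℝ) → Fin 3 → ℝ}

theorem snoc_affineCombination (hf : MultiAffineFn f) (v : Fin m → ℝ) (l a b : ℝ) :
    f (Fin.snoc v ((1 - l) * a + l * b)) = (1 - l) • f (Fin.snoc v a) + l • f (Fin.snoc v b) := by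
  simpa only [Fin.update_snoc_last] using hf (Fin.last m) (Fin.snoc v a) a b (1 - l) l (by ring)

theorem snoc_eq_add_smul (hf : MultiAffineFn f) (v : Fin m → ℝ) (t : ℝ) :
    f (Fin.snoc v t) = f (Fin.snoc v 0) + t • (f (Fin.snoc v 1) - f (Fin.snoc v 0)) := by
  have h := hf.snoc_affineCombination v t 0 1
  rw [show (1 - t) * 0 + t * 1 = t by ring] at h
  rw [h]
  module

theorem comp_snoc (hf : MultiAffineFn f) (t : ℝ) : MultiAffineFn fun v => f (Fin.snoc v t) := by
  intro i v s s' l l' hl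
  simpa only [Fin.snoc_update] using hf i.castSucc (Fin.snoc v t) s s' l l' hl

end MultiAffineFn

namespace SymmetricFn

theorem comp_snoc {m : ℕ} {f : (Fin (m + 1) → ℝ) → Fin 3 → ℝ} (hf : SymmetricFn f) (t : ℝ) :
    SymmetricFn fun v => f (Fin.snoc v t) := by
  intro σ v
  change f _ = f _
  rw [← Fin.snoc_comp_permCongr_optionCongr, hf]

theorem snoc_snoc_comm {m : ℕ} {f : (Fin (m + 2) → ℝ) → Fin 3 → ℝ} (hf : SymmetricFn f)
    (w : Fin m → ℝ) (s t : ℝ) :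
    f (Fin.snoc (Fin.snoc w s) t) = f (Fin.snoc (Fin.snoc w t) s) := by
  rw [← Fin.snoc_snoc_comp_swap, hf]

end SymmetricFn

theorem hasDerivAt_comp_snoc_self {m : ℕ} {f : (Fin (m + 1) → ℝ) → Fin 3 → ℝ}
    (hf : MultiAffineFn f) {g : ℝ → Fin m → ℝ} {u : ℝ} {f₀' f₁' : Fin 3 → ℝ}
    (h₀ : HasDerivAt (fun s => f (Fin.snoc (g s) 0)) f₀' u)
    (h₁ : HasDerivAt (fun s => f (Fin.snoc (g s) 1)) f₁' u) :
    HasDerivAt (fun s => f (Fin.snoc (g s) s))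
      (f₀' + (f (Fin.snoc (g u) 1) - f (Fin.snoc (g u) 0)) + u • (f₁' - f₀')) u := by
  have hfg : (fun s => f (Fin.snoc (g s) s)) = fun s =>
      f (Fin.snoc (g s) 0) + s • (f (Fin.snoc (g s) 1) - f (Fin.snoc (g s) 0)) :=
    funext fun s => hf.snoc_eq_add_smul (g s) s
  rw [hfg]
  refine (h₀.add ((hasDerivAt_id u).smul (h₁.sub h₀))).congr_deriv ?_
  simp only [id_eq, one_smul, Pi.sub_apply]
  abel

theorem hasDerivAt_diag : ∀ {m : ℕ} {f : (Fin (m + 1) → ℝ) → Fin 3 → ℝ},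
    SymmetricFn f → MultiAffineFn f → ∀ u : ℝ,
    HasDerivAt (fun u : ℝ => f fun _ => u)
      (((m : ℝ) + 1) • (f (Fin.snoc (fun _ => u) 1) - f (Fin.snoc (fun _ => u) 0))) u
  | 0, f, _, hm, u => by
    convert hasDerivAt_comp_snoc_self hm (g := fun _ _ => u) (hasDerivAt_const u _)
      (hasDerivAt_const u _) using 1
    · funext s
      rw [Fin.const_eq_snoc]
      exact congrArg (fun v => f (Fin.snoc v s)) (Subsingleton.elim _ _)
    · simp
  | m + 1, f, hs, hm, u => by
    simp only [Fin.const_eq_snoc (m := m + 1)]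
    refine (hasDerivAt_comp_snoc_self hm (hasDerivAt_diag (hs.comp_snoc 0) (hm.comp_snoc 0) u)
      (hasDerivAt_diag (hs.comp_snoc 1) (hm.comp_snoc 1) u)).congr_deriv ?_
    simp only [Fin.const_eq_snoc (m := m)]
    set w : Fin m → ℝ := fun _ => u
    have hslot : ∀ s, f (Fin.snoc (Fin.snoc w u) s) = f (Fin.snoc (Fin.snoc w s) 0) +
        u • (f (Fin.snoc (Fin.snoc w s) 1) - f (Fin.snoc (Fin.snoc w s) 0)) := fun s => by
      rw [hs.snoc_snoc_comm, hm.snoc_eq_add_smul]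
    rw [hslot 0, hslot 1]
    push_cast
    module

theorem not_linearIndependent_of_smul_add_smul_eq {R V : Type*} [Ring R] [AddCommGroup V]
    [Module R V] {x y z : V} {α β γ : R} (hγ : γ ≠ 0) (h : α • x + β • y = γ • z) :
    ¬LinearIndependent R ![x, y, z] := fun hli => by
  have hrel : ∑ i, ![α, β, -γ] i • ![x, y, z] i = 0 := by
    simp [Fin.sum_univ_three, h]
  exact hγ (by simpa using Fintype.linearIndependent_iff.mp hli _ hrel 2)

theorem blossom_developability_general {n : ℕ}
    (c d : (Fin (n + 1) → ℝ) → Fin 3 → ℝ)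
    (hcs : SymmetricFn c) (hcm : MultiAffineFn c)
    (hds : SymmetricFn d) (hdm : MultiAffineFn d)
    (Λ M : ℝ)
    (hblossom : ∀ v : Fin n → ℝ, c (Fin.snoc v Λ) = d (Fin.snoc v M))
    (C D : ℝ → Fin 3 → ℝ)
    (hC : ∀ u, C u = c (fun _ => u)) (hD : ∀ u, D u = d (fun _ => u))
    (a b lam mu : ℝ)
    (hlam : Λ = (1 - lam) * a + lam * b) (hmu : M = (1 - mu) * a + mu * b) :
    ∀ u,
      ((1 - lam) • c (Fin.snoc (fun _ => u) a) + lam • c (Fin.snoc (fun _ => u) b)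
        = (1 - mu) • d (Fin.snoc (fun _ => u) a) + mu • d (Fin.snoc (fun _ => u) b))
      ∧ ¬ LinearIndependent ℝ ![deriv C u, deriv D u, D u - C u] := by
  intro u
  set w : Fin n → ℝ := fun _ => u
  refine ⟨?_, ?_⟩
  · rw [← hcm.snoc_affineCombination, ← hdm.snoc_affineCombination, ← hlam, ← hmu, hblossom]
  set E := c (Fin.snoc w 1) - c (Fin.snoc w 0)
  set F := d (Fin.snoc w 1) - d (Fin.snoc w 0)
  have hC' : deriv C u = ((n : ℝ) + 1) • E := by
    rw [funext hC]
    exact (hasDerivAt_diag hcs hcm u).deriv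
  have hD' : deriv D u = ((n : ℝ) + 1) • F := by
    rw [funext hD]
    exact (hasDerivAt_diag hds hdm u).deriv
  have hDC : D u - C u = (Λ - u) • E + (u - M) • F := by
    have h := hblossom w
    rw [hcm.snoc_eq_add_smul, hdm.snoc_eq_add_smul] at h
    rw [hC, hD, Fin.const_eq_snoc (m := n), hcm.snoc_eq_add_smul, hdm.snoc_eq_add_smul]
    linear_combination (norm := module) -h
  refine not_linearIndependent_of_smul_add_smul_eq (α := Λ - u) (β := u - M)
    (γ := (n : ℝ) + 1) (by positivity) ?_
  rw [hC', hD', hDC]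
  module

/-- If the blossoms of two curves satisfy
`c(v₁,…,vₙ,Λ*) = d(v₁,…,vₙ,M*)` for all `v₁,…,vₙ`, then the corresponding
intermediate De Boor points satisfy
`(1-λ̂)·A(u) + λ̂·B(u) = (1-μ̂)·A'(u) + μ̂·B'(u)` where `A(u) = c(u,…,u,a)`,
`B(u) = c(u,…,u,b)` for any `a < b` with `Λ* = (1-λ̂)a + λ̂b` (analogously for
`d`), and in particular the vectors `C'(u)`, `D'(u)`, `D(u)-C(u)` of the
diagonal curves are linearly dependent for all `u`. -/
theorem blossom_developability {n : ℕ}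
    (c d : (Fin (n + 1) → ℝ) → Fin 3 → ℝ)
    (hcs : SymmetricFn c) (hcm : MultiAffineFn c)
    (hds : SymmetricFn d) (hdm : MultiAffineFn d)
    (Λ M : ℝ)
    (hblossom : ∀ v : Fin n → ℝ, c (Fin.snoc v Λ) = d (Fin.snoc v M))
    (C D : ℝ → Fin 3 → ℝ)
    (hC : ∀ u, C u = c (fun _ => u)) (hD : ∀ u, D u = d (fun _ => u))
    (a b lam mu : ℝ) (hab : a < b)
    (hlam : Λ = (1 - lam) * a + lam * b) (hmu : M = (1 - mu) * a + mu * b) :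
    ∀ u,
      ((1 - lam) • c (Fin.snoc (fun _ => u) a) + lam • c (Fin.snoc (fun _ => u) b)
        = (1 - mu) • d (Fin.snoc (fun _ => u) a) + mu • d (Fin.snoc (fun _ => u) b))
      ∧ ¬ LinearIndependent ℝ ![deriv C u, deriv D u, D u - C u] :=
  blossom_developability_general c d hcs hcm hds hdm Λ M hblossom C D hC hD a b lam mu hlam hmu
end

section
/- Let d : ℝⁿ → ℝ³ be a symmetric multiaffine map with diagonal D(u) = d(u,…,u), and let f : ℝ → ℝ be an affine function. Define h : ℝ^{n+1} → ℝ³ by h(u₀,…,uₙ) = (1/(n+1)) · Σ_{i=0}^{n} f(u_i) · d(u₀,…,u_{i-1},u_{i+1},…,uₙ). Then h is symmetric, multiaffine, and its diagonal satisfies h(u,…,u) = f(u)·D(u) for all u. -/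
open Function

/-- The blossom of `u ↦ f(u) • D(u)` built from the blossom `d` of `D`. -/
noncomputable def affineScalingBlossom {n : ℕ} (f : ℝ → ℝ) (d : (Fin n → ℝ) → Fin 3 → ℝ)
    (v : Fin (n + 1) → ℝ) : Fin 3 → ℝ :=
  ((n : ℝ) + 1)⁻¹ • ∑ i : Fin (n + 1), f (v i) • d (v ∘ i.succAbove)

namespace SymmetricFn

variable {n : ℕ} {d : (Fin n → ℝ) → Fin 3 → ℝ}

theorem apply_comp_eq_of_range_eq (hd : SymmetricFn d) {ι : Type*} (v : ι → ℝ)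
    {g₁ g₂ : Fin n → ι} (hg₁ : Injective g₁) (hg₂ : Injective g₂)
    (hrange : Set.range g₁ = Set.range g₂) :
    d (v ∘ g₁) = d (v ∘ g₂) := by
  let τ : Equiv.Perm (Fin n) := (Equiv.ofInjective g₁ hg₁).trans
    ((Equiv.setCongr hrange).trans (Equiv.ofInjective g₂ hg₂).symm)
  have hτ : g₂ ∘ τ = g₁ := funext fun k => by simp [τ, Equiv.apply_ofInjective_symm hg₂]
  rw [← hτ, ← comp_assoc, hd]

theorem apply_perm_comp_succAbove (hd : SymmetricFn d) (σ : Equiv.Perm (Fin (n + 1)))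
    (v : Fin (n + 1) → ℝ) (i : Fin (n + 1)) :
    d ((v ∘ σ) ∘ i.succAbove) = d (v ∘ (σ i).succAbove) := by
  refine hd.apply_comp_eq_of_range_eq v (σ.injective.comp Fin.succAbove_right_injective)
    Fin.succAbove_right_injective ?_
  change Set.range (σ ∘ i.succAbove) = _
  rw [Set.range_comp, Fin.range_succAbove, Fin.range_succAbove,
    Set.image_compl_eq σ.bijective, Set.image_singleton]

end SymmetricFn

namespace MultiAffineFn

variable {n : ℕ}

theorem sum {ι : Type*} (s : Finset ι) {c : ι → (Fin n → ℝ) → Fin 3 → ℝ}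
    (hc : ∀ j ∈ s, MultiAffineFn (c j)) :
    MultiAffineFn fun v => ∑ j ∈ s, c j v := by
  intro i v x y l m hlm
  simp only [Finset.smul_sum, ← Finset.sum_add_distrib]
  exact Finset.sum_congr rfl fun j hj => hc j hj i v x y l m hlm

theorem const_smul {c : (Fin n → ℝ) → Fin 3 → ℝ} (hc : MultiAffineFn c) (a : ℝ) :
    MultiAffineFn fun v => a • c v := by
  intro i v x y l m hlm
  beta_reduce
  rw [hc i v x y l m hlm, smul_add, smul_comm a l, smul_comm a m]

end MultiAffineFn

theorem map_affine_combination_of_eq_mul_add {f : ℝ → ℝ} {a b : ℝ}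
    (hf : ∀ u, f u = a * u + b) {s t l m : ℝ} (hlm : l + m = 1) :
    f (l * s + m * t) = l * f s + m * f t := by
  simp only [hf]
  linear_combination -b * hlm

theorem multiAffineFn_smul_comp_succAbove {n : ℕ} {d : (Fin n → ℝ) → Fin 3 → ℝ}
    (hd : MultiAffineFn d) {f : ℝ → ℝ} {a b : ℝ} (hf : ∀ u, f u = a * u + b)
    (j : Fin (n + 1)) :
    MultiAffineFn fun v => f (v j) • d (v ∘ j.succAbove) := by
  intro i v s t l m hlm
  rcases eq_or_ne i j with rfl | hij
  · have hskip : ∀ x, update v i x ∘ i.succAbove = v ∘ i.succAbove := fun x =>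
      update_comp_eq_of_notMem_range _ _ (by simp)
    simp only [update_self, hskip, map_affine_combination_of_eq_mul_add hf hlm, add_smul, mul_smul]
  · obtain ⟨k, rfl⟩ := Fin.exists_succAbove_eq hij
    simp only [update_of_ne hij.symm, update_comp_eq_of_injective _ Fin.succAbove_right_injective,
      hd k _ s t l m hlm, smul_add, smul_comm (f (v j)) l, smul_comm (f (v j)) m]

section affineScalingBlossom

variable {n : ℕ} {d : (Fin n → ℝ) → Fin 3 → ℝ} {f : ℝ → ℝ}

theorem symmetricFn_affineScalingBlossom (hd : SymmetricFn d) :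
    SymmetricFn (affineScalingBlossom f d) := by
  intro σ v
  unfold affineScalingBlossom
  rw [← Equiv.sum_comp σ fun i => f (v i) • d (v ∘ i.succAbove)]
  simp only [comp_apply, hd.apply_perm_comp_succAbove]

theorem multiAffineFn_affineScalingBlossom (hd : MultiAffineFn d) {a b : ℝ}
    (hf : ∀ u, f u = a * u + b) :
    MultiAffineFn (affineScalingBlossom f d) :=
  (MultiAffineFn.sum _ fun j _ => multiAffineFn_smul_comp_succAbove hd hf j).const_smul _

theorem affineScalingBlossom_diag (u : ℝ) :
    affineScalingBlossom f d (fun _ => u) = f u • d (fun _ => u) := by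
  have hconst : ∀ i : Fin (n + 1), (fun _ => u) ∘ i.succAbove = fun _ : Fin n => u :=
    fun _ => rfl
  have hcard : ((n : ℝ) + 1)⁻¹ * (n + 1 : ℕ) = 1 := by push_cast; field_simp
  simp only [affineScalingBlossom, hconst, Finset.sum_const, Finset.card_univ, Fintype.card_fin]
  rw [← Nat.cast_smul_eq_nsmul ℝ, smul_smul, hcard, one_smul]

end affineScalingBlossom

/-- If `d` is a symmetric multiaffine map of degree `n` with diagonal `D` and
`f` is affine, then `h(u₀,…,uₙ) = (1/(n+1)) Σᵢ f(uᵢ)·d(u₀,…,ûᵢ,…,uₙ)` is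
symmetric, multiaffine, and its diagonal is `h(u,…,u) = f(u)·D(u)`. -/
theorem blossom_of_affine_scaling {n : ℕ}
    (d : (Fin n → ℝ) → Fin 3 → ℝ) (hds : SymmetricFn d) (hdm : MultiAffineFn d)
    (D : ℝ → Fin 3 → ℝ) (hD : ∀ u, D u = d (fun _ => u))
    (f : ℝ → ℝ) (hf : ∃ a b : ℝ, ∀ u, f u = a * u + b)
    (h : (Fin (n + 1) → ℝ) → Fin 3 → ℝ)
    (hh : ∀ v : Fin (n + 1) → ℝ,
      h v = ((n : ℝ) + 1)⁻¹ • ∑ i : Fin (n + 1), f (v i) • d (v ∘ i.succAbove)) :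
    SymmetricFn h ∧ MultiAffineFn h ∧ ∀ u : ℝ, h (fun _ => u) = f u • D u := by
  obtain ⟨a, b, hfab⟩ := hf
  obtain rfl : h = affineScalingBlossom f d := funext hh
  exact ⟨symmetricFn_affineScalingBlossom hds, multiAffineFn_affineScalingBlossom hdm hfab,
    fun u => by rw [hD, affineScalingBlossom_diag]⟩
end

section
/- Let c, d : ℝ → ℝ³ be curves whose blossoms (symmetric multiaffine maps of degree n over a knot sequence u₀ ≤ … ≤ u_K) satisfy c[v₁,…,v_{n-1},Λ*] = d[v₁,…,v_{n-1},M*] for all v₁,…,v_{n-1} and fixed reals Λ*, M*. Then the control points c_i = c[u_i,…,u_{i+n-1}], d_i = d[u_i,…,u_{i+n-1}] satisfy the linear relation (u_{i+n} - Λ*)·c_i + (Λ* - u_i)·c_{i+1} = (u_{i+n} - M*)·d_i + (M* - u_i)·d_{i+1} for all i with u_i < u_{i+n}. -/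
/-!
Write `v = (u_{i+1}, …, u_{i+n})`. By symmetry the two control points are `c[v, uᵢ]` and
`c[v, u_{i+n+1}]`, and affinity in the last slot gives
`(u_{i+n+1} - uᵢ) • c[v, Λ*] = (u_{i+n+1} - Λ*) • c[v, uᵢ] + (Λ* - uᵢ) • c[v, u_{i+n+1}]`;
the same holds for `d` with `M*`, and the blossom relation `c[v, Λ*] = d[v, M*]` equates the
left-hand sides.
-/

namespace MultiAffineFn

variable {n : ℕ} {f : (Fin n → ℝ) → Fin 3 → ℝ}

theorem sub_smul_apply_update (hf : MultiAffineFn f) (i : Fin n) (v : Fin n → ℝ)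
    (a b x : ℝ) :
    (b - a) • f (Function.update v i x) =
      (b - x) • f (Function.update v i a) + (x - a) • f (Function.update v i b) := by
  by_cases hab : a = b
  · subst hab
    rw [sub_self, zero_smul, ← add_smul, sub_add_sub_cancel, sub_self, zero_smul]
  have hba : b - a ≠ 0 := sub_ne_zero.mpr (Ne.symm hab)
  have hweights : (b - x) / (b - a) + (x - a) / (b - a) = 1 := by
    field_simp
    ring
  have hx : (b - x) / (b - a) * a + (x - a) / (b - a) * b = x := by
    field_simp
    ring
  have hexpand := hf i v a b _ _ hweights
  rw [hx] at hexpand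
  rw [hexpand, smul_add, smul_smul, smul_smul, mul_div_cancel₀ _ hba, mul_div_cancel₀ _ hba]

theorem sub_smul_apply_snoc {f : (Fin (n + 1) → ℝ) → Fin 3 → ℝ} (hf : MultiAffineFn f)
    (v : Fin n → ℝ) (a b x : ℝ) :
    (b - a) • f (Fin.snoc v x) = (b - x) • f (Fin.snoc v a) + (x - a) • f (Fin.snoc v b) := by
  simpa only [Fin.update_snoc_last] using hf.sub_smul_apply_update (Fin.last n) (Fin.snoc v 0) a b x

end MultiAffineFn

theorem SymmetricFn.apply_snoc {n : ℕ} {f : (Fin (n + 1) → ℝ) → Fin 3 → ℝ} (hf : SymmetricFn f)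
    (v : Fin n → ℝ) (a : ℝ) : f (Fin.snoc v a) = f (Fin.cons a v) := by
  rw [Fin.snoc_eq_cons_rotate]
  exact hf (finRotate (n + 1)) (Fin.cons a v)

theorem Fin.cons_apply_add_one_add {α : Type*} {n : ℕ} (u : ℕ → α) (i : ℕ) :
    (Fin.cons (u i) (fun j : Fin n => u (i + 1 + j)) : Fin (n + 1) → α) =
      fun j : Fin (n + 1) => u (i + j) := by
  funext j
  refine Fin.cases ?_ (fun k => ?_) j
  · simp
  · simp [Nat.add_right_comm, Nat.add_assoc]

theorem Fin.snoc_apply_add {α : Type*} {n : ℕ} (u : ℕ → α) (i : ℕ) :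
    (Fin.snoc (fun j : Fin n => u (i + j)) (u (i + n)) : Fin (n + 1) → α) =
      fun j : Fin (n + 1) => u (i + j) := by
  funext j
  refine Fin.lastCases ?_ (fun k => ?_) j <;> simp

theorem control_point_relation_of_blossom_relation_general {n : ℕ}
    (c d : (Fin (n + 1) → ℝ) → Fin 3 → ℝ)
    (hcs : SymmetricFn c) (hcm : MultiAffineFn c)
    (hds : SymmetricFn d) (hdm : MultiAffineFn d)
    (u : ℕ → ℝ) (Λ M : ℝ)
    (hblossom : ∀ v : Fin n → ℝ, c (Fin.snoc v Λ) = d (Fin.snoc v M)) :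
    ∀ i : ℕ, u i < u (i + n + 1) →
      (u (i + n + 1) - Λ) • c (fun j : Fin (n + 1) => u (i + j)) +
        (Λ - u i) • c (fun j : Fin (n + 1) => u (i + 1 + j)) =
      (u (i + n + 1) - M) • d (fun j : Fin (n + 1) => u (i + j)) +
        (M - u i) • d (fun j : Fin (n + 1) => u (i + 1 + j)) := by
  intro i _
  set v : Fin n → ℝ := fun j => u (i + 1 + j)
  have hcons : (fun j : Fin (n + 1) => u (i + j)) = Fin.cons (u i) v :=
    (Fin.cons_apply_add_one_add u i).symm
  have hsnoc : (fun j : Fin (n + 1) => u (i + 1 + j)) = Fin.snoc v (u (i + n + 1)) := by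
    rw [Nat.add_right_comm, ← Fin.snoc_apply_add u (i + 1)]
  rw [hcons, hsnoc, ← hcs.apply_snoc, ← hds.apply_snoc, ← hcm.sub_smul_apply_snoc,
    ← hdm.sub_smul_apply_snoc, hblossom]

/-- Corollary 1 of the paper: if the blossoms (degree `n+1`, knots `u`) satisfy
`c[v₁,…,vₙ,Λ*] = d[v₁,…,vₙ,M*]`, then the control points
`cᵢ = c[uᵢ,…,u_{i+n}]`, `dᵢ = d[uᵢ,…,u_{i+n}]` satisfy
`(u_{i+n+1}-Λ*)·cᵢ + (Λ*-uᵢ)·c_{i+1} = (u_{i+n+1}-M*)·dᵢ + (M*-uᵢ)·d_{i+1}`. -/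
theorem control_point_relation_of_blossom_relation {n : ℕ}
    (c d : (Fin (n + 1) → ℝ) → Fin 3 → ℝ)
    (hcs : SymmetricFn c) (hcm : MultiAffineFn c)
    (hds : SymmetricFn d) (hdm : MultiAffineFn d)
    (u : ℕ → ℝ) (hu : Monotone u) (Λ M : ℝ)
    (hblossom : ∀ v : Fin n → ℝ, c (Fin.snoc v Λ) = d (Fin.snoc v M)) :
    ∀ i : ℕ, u i < u (i + n + 1) →
      (u (i + n + 1) - Λ) • c (fun j : Fin (n + 1) => u (i + j)) +
        (Λ - u i) • c (fun j : Fin (n + 1) => u (i + 1 + j)) =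
      (u (i + n + 1) - M) • d (fun j : Fin (n + 1) => u (i + j)) +
        (M - u i) • d (fun j : Fin (n + 1) => u (i + 1 + j)) :=
  control_point_relation_of_blossom_relation_general c d hcs hcm hds hdm u Λ M hblossom
end
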